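/- arXiv:1210.3880 — 2 statements merged into one kernel-verified Lean document; each statement's English description precedes it below -/
import Mathlib

section
/- There exists an absolute constant C > 0 such that for every real K ≥ 3 and every integer k with 1 ≤ k ≤ K, one has ∏_{ℓ | k, ℓ prime, ℓ > √(log K)} (1 + 1/ℓ) ≤ C. -/
/-!
Write `L = log K`; as `∏ (1 + 1/ℓ) ≤ exp (∑ 1/ℓ)`, it suffices to bound `∑ 1/ℓ`. Everything rests
on one inequality: if `ℓ ≥ x > 1` then `1/ℓ ≤ log ℓ / (x log x)`, so a set of such `ℓ` has
`∑ 1/ℓ ≤ log (∏ ℓ) / (x log x)`. For the prime divisors `ℓ > L` of `k` the product is at most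
`k ≤ e^L`, which gives `1 / log L ≤ 1 / log log 3`. The primes in `(√L, L]` fall into the dyadic
blocks `[2^j, 2^(j+1)]` with `j₀ ≤ j ≤ 2 j₀ + 1`, where `2^j₀ ≈ √L`; in each block the product is
at most `4^(2^(j+1))` by Chebyshev's bound on the primorial, which gives `4 / j`, so these primes
contribute at most `4 (j₀ + 2) / j₀ ≤ 12`.
-/

open scoped Classical

open Finset Real

theorem Finset.sum_one_div_le_log_prod_div {ι : Type*} (s : Finset ι) {f : ι → ℝ} {x : ℝ}
    (hx : 1 < x) (hf : ∀ i ∈ s, x ≤ f i) :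
    ∑ i ∈ s, 1 / f i ≤ log (∏ i ∈ s, f i) / (x * log x) := by
  have hxlog : 0 < x * log x := mul_pos (by linarith) (log_pos hx)
  have hfpos : ∀ i ∈ s, 0 < f i := fun i hi => by linarith [hf i hi]
  rw [log_prod (fun i hi => (hfpos i hi).ne'), sum_div]
  refine sum_le_sum fun i hi => ?_
  rw [div_le_div_iff₀ (hfpos i hi) hxlog, one_mul, mul_comm (log (f i))]
  exact mul_le_mul (hf i hi) (log_le_log (by linarith) (hf i hi)) (log_pos hx).le
    (hfpos i hi).le

theorem Nat.prod_le_four_pow_of_prime_le {s : Finset ℕ} {n : ℕ}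
    (hs : ∀ p ∈ s, p.Prime ∧ p ≤ n) : ∏ p ∈ s, p ≤ 4 ^ n := by
  refine (Nat.le_of_dvd (primorial_pos n) (prod_dvd_prod_of_subset _ _ _ fun p hp => ?_)).trans
    (primorial_le_four_pow n)
  simp [hs p hp]

theorem sum_one_div_primes_dyadic_le {s : Finset ℕ} {j : ℕ} (hj : 1 ≤ j)
    (hs : ∀ p ∈ s, p.Prime ∧ 2 ^ j ≤ p ∧ p ≤ 2 ^ (j + 1)) :
    ∑ p ∈ s, (1 : ℝ) / p ≤ 4 / j := by
  have h2j : (1 : ℝ) < 2 ^ j := one_lt_pow₀ one_lt_two (by omega)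
  have hprod : log (∏ p ∈ s, (p : ℝ)) ≤ log ((4 : ℝ) ^ 2 ^ (j + 1)) := by
    refine log_le_log (prod_pos fun p hp => by exact_mod_cast (hs p hp).1.pos) ?_
    rw [← Nat.cast_prod]
    exact_mod_cast Nat.prod_le_four_pow_of_prime_le fun p hp => ⟨(hs p hp).1, (hs p hp).2.2⟩
  calc ∑ p ∈ s, (1 : ℝ) / p ≤ log (∏ p ∈ s, (p : ℝ)) / (2 ^ j * log (2 ^ j)) :=
        s.sum_one_div_le_log_prod_div h2j fun p hp => by exact_mod_cast (hs p hp).2.1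
    _ ≤ log ((4 : ℝ) ^ 2 ^ (j + 1)) / (2 ^ j * log (2 ^ j)) := by
        have := log_pos h2j
        gcongr
    _ = 4 / j := by
        rw [log_pow, log_pow, show (4 : ℝ) = 2 ^ 2 by norm_num, log_pow]
        have := log_pos one_lt_two
        field_simp
        push_cast
        ring

theorem sum_one_div_primes_Icc_sq_le {s : Finset ℕ} {n : ℕ} (hn : 2 ≤ n)
    (hs : ∀ p ∈ s, p.Prime ∧ n ≤ p ∧ p ≤ n ^ 2) : ∑ p ∈ s, (1 : ℝ) / p ≤ 12 := by
  set j₀ := Nat.log 2 n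
  have hj₀ : 1 ≤ j₀ := Nat.log_pos one_lt_two hn
  have hmaps : ∀ p ∈ s, Nat.log 2 p ∈ Icc j₀ (2 * j₀ + 1) := by
    intro p hp
    obtain ⟨hpp, hnp, hpn⟩ := hs p hp
    have hp_lt : p < 2 ^ (2 * j₀ + 2) :=
      calc p ≤ n ^ 2 := hpn
        _ < (2 ^ (j₀ + 1)) ^ 2 :=
          Nat.pow_lt_pow_left (Nat.lt_pow_succ_log_self one_lt_two n) two_ne_zero
        _ = 2 ^ (2 * j₀ + 2) := by ring
    exact mem_Icc.2 ⟨Nat.log_mono_right hnp,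
      Nat.lt_succ_iff.1 (Nat.log_lt_of_lt_pow hpp.ne_zero hp_lt)⟩
  rw [← sum_fiberwise_of_maps_to hmaps]
  calc ∑ j ∈ Icc j₀ (2 * j₀ + 1), ∑ p ∈ s with Nat.log 2 p = j, (1 : ℝ) / p
      ≤ ∑ j ∈ Icc j₀ (2 * j₀ + 1), (4 : ℝ) / j₀ := by
        refine sum_le_sum fun j hj => ?_
        have hj₀j : j₀ ≤ j := (mem_Icc.1 hj).1
        refine (sum_one_div_primes_dyadic_le (hj₀.trans hj₀j) fun p hp => ?_).trans ?_
        · obtain ⟨hps, rfl⟩ := mem_filter.1 hp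
          have hpp := (hs p hps).1
          exact ⟨hpp, Nat.pow_log_le_self 2 hpp.ne_zero,
            (Nat.lt_pow_succ_log_self one_lt_two p).le⟩
        · gcongr
    _ = (j₀ + 2) * (4 / j₀) := by
        rw [sum_const, Nat.card_Icc, nsmul_eq_mul]
        congr 1
        push_cast [show 2 * j₀ + 1 + 1 - j₀ = j₀ + 2 by omega]
        ring
    _ ≤ 12 := by
        have : (1 : ℝ) ≤ j₀ := by exact_mod_cast hj₀
        rw [mul_div_assoc', div_le_iff₀ (by positivity)]
        linarith

theorem sum_one_div_primes_Ioc_sq_le {s : Finset ℕ} {y : ℝ} (hy : 1 < y)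
    (hs : ∀ p ∈ s, p.Prime ∧ y < p ∧ (p : ℝ) ≤ y ^ 2) : ∑ p ∈ s, (1 : ℝ) / p ≤ 12 := by
  refine sum_one_div_primes_Icc_sq_le (n := ⌈y⌉₊) (Nat.lt_ceil.2 (by exact_mod_cast hy))
    fun p hp => ⟨(hs p hp).1, Nat.ceil_le.2 (hs p hp).2.1.le, ?_⟩
  have : (p : ℝ) ≤ (⌈y⌉₊ : ℝ) ^ 2 :=
    (hs p hp).2.2.trans (pow_le_pow_left₀ (by linarith) (Nat.le_ceil y) 2)
  exact_mod_cast this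

theorem sum_one_div_le_of_subset_primeFactors {k : ℕ} (hk : k ≠ 0) {s : Finset ℕ}
    (hs : s ⊆ k.primeFactors) {x : ℝ} (hx : 1 < x) (hxs : ∀ p ∈ s, x ≤ p) :
    ∑ p ∈ s, (1 : ℝ) / p ≤ log k / (x * log x) := by
  have hprod : ∏ p ∈ s, p ≤ k :=
    Nat.le_of_dvd (Nat.pos_of_ne_zero hk)
      ((prod_dvd_prod_of_subset _ _ _ hs).trans k.prod_primeFactors_dvd)
  have hprod_pos : 0 < ∏ p ∈ s, (p : ℝ) :=
    prod_pos fun p hp => by exact_mod_cast (Nat.prime_of_mem_primeFactors (hs hp)).pos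
  have hxlog : 0 < x * log x := mul_pos (by linarith) (log_pos hx)
  calc ∑ p ∈ s, (1 : ℝ) / p ≤ log (∏ p ∈ s, (p : ℝ)) / (x * log x) :=
        s.sum_one_div_le_log_prod_div hx hxs
    _ ≤ log k / (x * log x) := by
        gcongr
        rw [← Nat.cast_prod]
        exact_mod_cast hprod

/-- For `3 ≤ K` and `1 ≤ k ≤ K`, the product of `1 + 1/ℓ` over the prime divisors `ℓ` of `k`
exceeding `√(log K)` is bounded by an absolute constant. -/
theorem large_prime_factors_product_bound :
    ∃ C : ℝ, 0 < C ∧ ∀ K : ℝ, 3 ≤ K → ∀ k : ℕ, 1 ≤ k → (k : ℝ) ≤ K →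
      (∏ ℓ ∈ k.primeFactors.filter (fun ℓ : ℕ => Real.sqrt (Real.log K) < (ℓ : ℝ)),
        (1 + 1 / (ℓ : ℝ))) ≤ C := by
  have hlog3 : 1 < log 3 := by
    rw [lt_log_iff_exp_lt (by norm_num)]
    exact exp_one_lt_three
  refine ⟨exp (12 + 1 / log (log 3)), exp_pos _, fun K hK k hk hkK => ?_⟩
  have hlogK : log 3 ≤ log K := log_le_log (by norm_num) hK
  have hL : 1 < log K := hlog3.trans_le hlogK
  refine (prod_one_add_le_exp_sum _ fun ℓ => by positivity).trans (exp_le_exp.2 ?_)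
  rw [← sum_filter_add_sum_filter_not _ (fun ℓ : ℕ => (ℓ : ℝ) ≤ log K)]
  gcongr ?_ + ?_
  · refine sum_one_div_primes_Ioc_sq_le (y := √(log K)) (lt_sqrt_of_sq_lt (by simpa using hL))
      fun p hp => ?_
    simp only [mem_filter] at hp
    exact ⟨Nat.prime_of_mem_primeFactors hp.1.1, hp.1.2, by rw [sq_sqrt (by linarith)]; exact hp.2⟩
  · have hlogk : log k ≤ log K := log_le_log (by exact_mod_cast hk) hkK
    have hloglog3 := log_pos hlog3
    calc _ ≤ log k / (log K * log (log K)) :=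
          sum_one_div_le_of_subset_primeFactors (by omega)
            ((filter_subset _ _).trans (filter_subset _ _))
            hL fun p hp => (not_le.1 (mem_filter.1 hp).2).le
      _ ≤ log K / (log K * log (log K)) := by gcongr; exact (mul_pos (by linarith) (log_pos hL)).le
      _ = 1 / log (log K) := by field_simp
      _ ≤ 1 / log (log 3) := by gcongr
end

section
/- There exists an absolute constant C > 0 such that for all real numbers D ≥ 1 and z ≥ 1, one has ∑_{1 ≤ d ≤ D} ∏_{2 < ℓ ≤ z, ℓ prime} (1 − ((−d)/ℓ)/ℓ) ≤ C·(D + 2^{π(z)}), where the outer sum is over positive integers d ≤ D. -/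
/-!
Expanding the product over the odd primes `ℓ ≤ z` writes the sum as
`∑_t (-1)^|t| m_t⁻¹ ∑_{d ≤ D} ∏_{ℓ ∈ t} (-d/ℓ)` over the `2^π(z)` subsets `t`, with `m_t = ∏_{ℓ ∈ t} ℓ`.
The empty set contributes `⌊D⌋`. For `t ≠ ∅` the summand is `m_t`-periodic in `d`, and by the Chinese
remainder theorem its sum over a period factors through a Legendre-symbol sum `∑_{x mod ℓ} (x/ℓ) = 0`;
so its partial sums are at most `m_t` in absolute value and the `t`-term is at most `1`.
-/

open scoped Classical NumberTheorySymbols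
open Finset Function

namespace Function.Periodic

theorem sum_Ico_eq_sum_range {M : Type*} [AddCommMonoid M] {f : ℕ → M} {a : ℕ}
    (hf : Periodic f a) (n : ℕ) : ∑ x ∈ Ico n (n + a), f x = ∑ x ∈ range a, f x := by
  calc ∑ x ∈ Ico n (n + a), f x = ∑ x ∈ Ico n (n + a), f (x % a) :=
        sum_congr rfl fun x _ => (hf.map_mod_nat x).symm
    _ = (((Multiset.Ico n (n + a)).map (· % a)).map f).sum := by rw [Multiset.map_map]; rfl
    _ = ∑ x ∈ range a, f x := by rw [Nat.multiset_Ico_map_mod]; rfl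

theorem abs_sum_Ico_le {M : Type*} [AddCommGroup M] [LinearOrder M] [IsOrderedAddMonoid M]
    {f : ℕ → M} {a : ℕ} (hf : Periodic f a) (ha : 0 < a) (hsum : ∑ x ∈ range a, f x = 0)
    {B : M} (hB : ∀ x, |f x| ≤ B) (n N : ℕ) : |∑ x ∈ Ico n (n + N), f x| ≤ a • B := by
  induction N using Nat.strong_induction_on generalizing n with
  | _ N ih =>
  rcases lt_or_ge N a with hN | hN
  · calc |∑ x ∈ Ico n (n + N), f x| ≤ ∑ x ∈ Ico n (n + N), |f x| := abs_sum_le_sum_abs _ _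
      _ ≤ N • B := (sum_le_card_nsmul _ _ _ fun x _ => hB x).trans_eq (by rw [Nat.card_Ico,
        Nat.add_sub_cancel_left])
      _ ≤ a • B := nsmul_le_nsmul_left ((abs_nonneg _).trans (hB 0)) hN.le
  · obtain ⟨N, rfl⟩ := Nat.exists_eq_add_of_le hN
    rw [← sum_Ico_consecutive f (Nat.le_add_right n a) (by omega), hf.sum_Ico_eq_sum_range,
      hsum, zero_add, ← add_assoc]
    exact ih N (by omega) (n + a)

theorem sum_range_mul_mul_of_coprime {R : Type*} [CommSemiring R] {f g : ℕ → R} {a b : ℕ}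
    (hf : Periodic f a) (hg : Periodic g b) (hab : a.Coprime b) :
    ∑ x ∈ range (a * b), f x * g x = (∑ x ∈ range a, f x) * ∑ x ∈ range b, g x := by
  rcases Nat.eq_zero_or_pos a with rfl | ha
  · simp
  rcases Nat.eq_zero_or_pos b with rfl | hb
  · simp
  rw [sum_mul_sum, ← sum_product']
  refine sum_nbij' (fun x => (x % a, x % b)) (fun p => Nat.chineseRemainder hab p.1 p.2)
    ?_ ?_ ?_ ?_ ?_
  · intro x _
    simp [Nat.mod_lt, ha, hb]
  · intro p _
    simpa using Nat.chineseRemainder_lt_mul hab _ _ ha.ne' hb.ne'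
  · intro x hx
    exact (Nat.chineseRemainder_modEq_unique hab (Nat.mod_modEq x a).symm
      (Nat.mod_modEq x b).symm).symm.eq_of_lt_of_lt
      (Nat.chineseRemainder_lt_mul hab _ _ ha.ne' hb.ne') (by simpa using hx)
  · rintro ⟨i, j⟩ hij
    obtain ⟨hi, hj⟩ := mem_product.mp hij
    exact Prod.ext (Nat.mod_eq_of_modEq (Nat.chineseRemainder hab i j).prop.1 (mem_range.mp hi))
      (Nat.mod_eq_of_modEq (Nat.chineseRemainder hab i j).prop.2 (mem_range.mp hj))
  · intro x _
    rw [hf.map_mod_nat, hg.map_mod_nat]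

end Function.Periodic

theorem jacobiSym_neg_natCast_periodic (b : ℕ) : Periodic (fun d : ℕ => J(-d | b)) b := by
  intro d
  refine jacobiSym.mod_left' ?_
  push_cast
  rw [neg_add, Int.add_neg_emod_self]

theorem sum_range_jacobiSym_eq_zero {p : ℕ} [Fact p.Prime] (hp : p ≠ 2) :
    ∑ x ∈ range p, J(x | p) = 0 := by
  obtain ⟨k, rfl⟩ := Nat.exists_eq_add_one_of_ne_zero (NeZero.ne p)
  rw [← Fin.sum_univ_eq_sum_range]
  -- `ZMod (k + 1)` is `Fin (k + 1)` by definition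
  show ∑ x : ZMod (k + 1), J(x.val | k + 1) = 0
  rw [← quadraticChar_sum_zero (F := ZMod (k + 1)) (by rwa [ZMod.ringChar_zmod_n])]
  refine Fintype.sum_congr _ _ fun x => ?_
  rw [← jacobiSym.legendreSym.to_jacobiSym, legendreSym]
  simp

theorem sum_range_jacobiSym_neg_eq_zero {p : ℕ} [Fact p.Prime] (hp : p ≠ 2) :
    ∑ x ∈ range p, J(-x | p) = 0 := by
  have hneg (x : ℕ) : J(-x | p) = J(-1 | p) * J(x | p) := by
    rw [← jacobiSym.mul_left, neg_one_mul]
  simp_rw [hneg, ← mul_sum, sum_range_jacobiSym_eq_zero hp, mul_zero]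

def jacobiProd (t : Finset ℕ) (d : ℕ) : ℤ := ∏ ℓ ∈ t, J(-d | ℓ)

theorem jacobiProd_periodic (t : Finset ℕ) : Periodic (jacobiProd t) (∏ ℓ ∈ t, ℓ) := by
  intro d
  refine prod_congr rfl fun ℓ hℓ => ?_
  obtain ⟨k, hk⟩ : ℓ ∣ ∏ ℓ ∈ t, ℓ := dvd_prod_of_mem _ hℓ
  rw [hk, mul_comm]
  exact (jacobiSym_neg_natCast_periodic ℓ).nat_mul k d

theorem abs_jacobiProd_le_one (t : Finset ℕ) (d : ℕ) : |jacobiProd t d| ≤ 1 := by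
  rw [jacobiProd, abs_prod]
  refine prod_le_one (fun _ _ => abs_nonneg _) fun ℓ _ => ?_
  rcases jacobiSym.trichotomy (-d) ℓ with h | h | h <;> simp [h]

theorem sum_range_jacobiProd_eq_zero {t : Finset ℕ} (ht : ∀ ℓ ∈ t, ℓ.Prime ∧ ℓ ≠ 2)
    (hne : t.Nonempty) : ∑ x ∈ range (∏ ℓ ∈ t, ℓ), jacobiProd t x = 0 := by
  obtain ⟨p, hp⟩ := hne
  have : Fact p.Prime := ⟨(ht p hp).1⟩
  have hcop : p.Coprime (∏ ℓ ∈ t.erase p, ℓ) := Nat.Coprime.prod_right fun ℓ hℓ =>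
    (Nat.coprime_primes (ht p hp).1 (ht ℓ (mem_of_mem_erase hℓ)).1).mpr (ne_of_mem_erase hℓ).symm
  have hsplit (x : ℕ) : jacobiProd t x = J(-x | p) * jacobiProd (t.erase p) x :=
    (mul_prod_erase t _ hp).symm
  rw [← mul_prod_erase t (fun ℓ => ℓ) hp]
  simp_rw [hsplit]
  rw [(jacobiSym_neg_natCast_periodic p).sum_range_mul_mul_of_coprime
    (jacobiProd_periodic (t.erase p)) hcop, sum_range_jacobiSym_neg_eq_zero (ht p hp).2, zero_mul]

theorem abs_sum_Icc_jacobiProd_le {t : Finset ℕ} (ht : ∀ ℓ ∈ t, ℓ.Prime ∧ ℓ ≠ 2)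
    (hne : t.Nonempty) (N : ℕ) :
    |∑ d ∈ Icc 1 N, jacobiProd t d| ≤ ∏ ℓ ∈ t, ℓ := by
  have hpos : 0 < ∏ ℓ ∈ t, ℓ := prod_pos fun ℓ hℓ => (ht ℓ hℓ).1.pos
  rw [← Ico_add_one_right_eq_Icc, add_comm N]
  simpa using (jacobiProd_periodic t).abs_sum_Ico_le hpos (sum_range_jacobiProd_eq_zero ht hne)
    (abs_jacobiProd_le_one t) 1 N

theorem abs_sum_Icc_prod_neg_jacobiSym_div_le_one {t : Finset ℕ}
    (ht : ∀ ℓ ∈ t, ℓ.Prime ∧ ℓ ≠ 2) (hne : t.Nonempty) (N : ℕ) :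
    |∑ d ∈ Icc 1 N, ∏ ℓ ∈ t, -((J(-d | ℓ) : ℝ) / ℓ)| ≤ 1 := by
  have hm : (0 : ℝ) < (∏ ℓ ∈ t, ℓ : ℕ) := by exact_mod_cast prod_pos fun ℓ hℓ => (ht ℓ hℓ).1.pos
  have hprod (d : ℕ) : ∏ ℓ ∈ t, -((J(-d | ℓ) : ℝ) / ℓ) =
      (-1) ^ #t / (∏ ℓ ∈ t, ℓ : ℕ) * jacobiProd t d := by
    rw [prod_neg, prod_div_distrib, jacobiProd, Int.cast_prod, Nat.cast_prod]
    ring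
  rw [sum_congr rfl fun d _ => hprod d, ← mul_sum, abs_mul, abs_div, abs_pow, abs_neg, abs_one,
    one_pow, abs_of_pos hm, ← Int.cast_sum]
  calc 1 / ((∏ ℓ ∈ t, ℓ : ℕ) : ℝ) * |((∑ d ∈ Icc 1 N, jacobiProd t d : ℤ) : ℝ)|
      ≤ 1 / ((∏ ℓ ∈ t, ℓ : ℕ) : ℝ) * (∏ ℓ ∈ t, ℓ : ℕ) := by
        gcongr
        exact_mod_cast abs_sum_Icc_jacobiProd_le ht hne N
    _ = 1 := one_div_mul_cancel hm.ne'

theorem sum_Icc_prod_one_sub_jacobiSym_div_le {S : Finset ℕ} (hS : ∀ ℓ ∈ S, ℓ.Prime ∧ ℓ ≠ 2)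
    (N : ℕ) : ∑ d ∈ Icc 1 N, ∏ ℓ ∈ S, (1 - (J(-d | ℓ) : ℝ) / ℓ) ≤ N + 2 ^ #S := by
  calc ∑ d ∈ Icc 1 N, ∏ ℓ ∈ S, (1 - (J(-d | ℓ) : ℝ) / ℓ)
      = ∑ t ∈ S.powerset, ∑ d ∈ Icc 1 N, ∏ ℓ ∈ t, -((J(-d | ℓ) : ℝ) / ℓ) := by
        simp_rw [sub_eq_add_neg, prod_one_add]
        exact sum_comm
    _ = N + ∑ t ∈ S.powerset.erase ∅, ∑ d ∈ Icc 1 N, ∏ ℓ ∈ t, -((J(-d | ℓ) : ℝ) / ℓ) := by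
        rw [← add_sum_erase _ _ (empty_mem_powerset S)]
        simp
    _ ≤ N + #(S.powerset.erase ∅) • (1 : ℝ) := by
        gcongr
        refine sum_le_card_nsmul _ _ _ fun t ht => ?_
        obtain ⟨hne, ht⟩ := mem_erase.mp ht
        exact le_of_abs_le (abs_sum_Icc_prod_neg_jacobiSym_div_le_one
          (fun ℓ hℓ => hS ℓ (mem_powerset.mp ht hℓ)) (nonempty_iff_ne_empty.mpr hne) N)
    _ ≤ N + 2 ^ #S := by
        rw [nsmul_one]
        gcongr
        exact_mod_cast card_erase_le.trans_eq (card_powerset S)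

/-- `∑_{d ≤ D} ∏_{2 < ℓ ≤ z} (1 - ((-d)/ℓ)/ℓ) ≪ D + 2^{π(z)}`, where `((-d)/ℓ)` is the
Legendre symbol at the odd prime `ℓ` (realized via the Jacobi symbol) and `π(z)` is the number
of primes up to `z`. -/
theorem sum_of_products_bound :
    ∃ C : ℝ, 0 < C ∧ ∀ D z : ℝ, 1 ≤ D → 1 ≤ z →
      (∑ d ∈ Finset.Icc 1 ⌊D⌋₊,
        ∏ ℓ ∈ (Finset.Ioc 2 ⌊z⌋₊).filter Nat.Prime,
          (1 - (jacobiSym (-(d : ℤ)) ℓ : ℝ) / (ℓ : ℝ))) ≤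
        C * (D + 2 ^ (Nat.primeCounting ⌊z⌋₊)) := by
  refine ⟨1, one_pos, fun D z hD _ => ?_⟩
  set S := (Ioc 2 ⌊z⌋₊).filter Nat.Prime
  have hS (ℓ) (hℓ : ℓ ∈ S) : ℓ.Prime ∧ ℓ ≠ 2 ∧ ℓ ≤ ⌊z⌋₊ := by
    simp only [S, mem_filter, mem_Ioc] at hℓ
    exact ⟨hℓ.2, by omega, hℓ.1.2⟩
  have hcard : #S ≤ Nat.primeCounting ⌊z⌋₊ := by
    rw [← Nat.primesLE_card_eq_primeCounting]
    exact card_le_card fun ℓ hℓ => Nat.mem_primesLE.mpr ⟨(hS ℓ hℓ).2.2, (hS ℓ hℓ).1⟩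
  calc _ ≤ (⌊D⌋₊ : ℝ) + 2 ^ #S :=
        sum_Icc_prod_one_sub_jacobiSym_div_le (fun ℓ hℓ => ⟨(hS ℓ hℓ).1, (hS ℓ hℓ).2.1⟩) _
    _ ≤ 1 * (D + 2 ^ Nat.primeCounting ⌊z⌋₊) := by
        rw [one_mul]
        gcongr
        · exact Nat.floor_le (by linarith)
        · norm_num
end
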